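/- arXiv:1908.05248 — 2 statements merged into one kernel-verified Lean document; each statement's English description precedes it below -/
import Mathlib

section
/- Suppose the generalized Taft algebra T_n(λ,m,0) acts linearly and inner faithfully on the quantum affine space A = k_p[u_1,…,u_t], where m, t, and ord(p_{ij}) for all i ≠ j are all at least 3. Then every such action is a trivial extension of an action on a quantum plane subalgebra A_{ij} or of an action on a quantum 3-space subalgebra A_{ijk}. -/
/-- Defining relations `u_i u_j = p_{ij} u_j u_i` of quantum affine space. -/
inductive QASRel (k : Type) [Field k] {t : ℕ} (p : Fin t → Fin t → k) :
    FreeAlgebra k (Fin t) → FreeAlgebra k (Fin t) → Prop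
  | rel (i j : Fin t) :
      QASRel k p (FreeAlgebra.ι k i * FreeAlgebra.ι k j)
        (p i j • (FreeAlgebra.ι k j * FreeAlgebra.ι k i))

/-- The quantum affine space `k_p[u_1, …, u_t]`. -/
abbrev QAS (k : Type) [Field k] {t : ℕ} (p : Fin t → Fin t → k) : Type :=
  RingQuot (QASRel k p)

/-- The generators `u_i` of the quantum affine space. -/
noncomputable def QAS.u (k : Type) [Field k] {t : ℕ} (p : Fin t → Fin t → k) (i : Fin t) :
    QAS k p :=
  RingQuot.mkAlgHom k (QASRel k p) (FreeAlgebra.ι k i)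
/-- Action data for the generalized Taft algebra `T_n(λ, m, γ)` on a `k`-algebra `A`:
the grouplike generator `g` acts as a `k`-algebra automorphism with `g^n = 1`, the
`(g,1)`-skew-primitive generator `x` acts as a `(g,1)`-skew derivation, and the defining
relations `g x = λ x g` and `x^m = γ(g^m - 1)` hold.  Giving such data is the same as
making `A` a left `T_n(λ, m, γ)`-module algebra. -/
structure TaftAction (k : Type) [Field k] (n m : ℕ) (lam gam : k)
    (A : Type) [Ring A] [Algebra k A] where
  g : A ≃ₐ[k] A
  x : Module.End k A
  g_pow : g ^ n = 1
  comm : ∀ a : A, g (x a) = lam • x (g a)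
  skew : ∀ a b : A, x (a * b) = g a * x b + x a * b
  x_pow : (x ^ m : Module.End k A) =
      gam • ((g ^ m : A ≃ₐ[k] A).toLinearMap - LinearMap.id)

/-- Inner faithfulness of a `T_n(λ,m,γ)`-action: no nonzero Hopf ideal annihilates `A`;
concretely, `x` acts by a nonzero operator and `g` acts by an automorphism of order
exactly `n`. -/
def TaftAction.InnerFaithful {k : Type} [Field k] {n m : ℕ} {lam gam : k}
    {A : Type} [Ring A] [Algebra k A] (T : TaftAction k n m lam gam A) : Prop :=
  T.x ≠ 0 ∧ orderOf T.g = n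

/-!
Letting `u_i` act on `k[X_1, …, X_t]` by `X_i` composed with a rescaling of the variables realises
the quantum affine space on its ordered monomials, so coefficients of `u_s` and of `u_w u_v` are
well defined. Comparing the coefficients of `u_w²` in `g(u_i) g(u_j) = p_{ij} g(u_j) g(u_i)`, where
`p_{ij} ≠ 1`, shows that `g(u_j) = α_j u_{σ j}` for a permutation `σ` preserving `p`; since
`p_{ij}² ≠ 1`, `σ` has no 2-cycles. Applying the skew derivation `x` to `u_i u_j = p_{ij} u_j u_i`
and comparing quadratic coefficients, together with `g x = λ x g`, kills every entry of the matrix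
of `x` unless `σ = 1`; as `x ≠ 0`, `g` is diagonal. Then a nonzero entry `u_v` of `x(u_c)` pins down
`α_s λ^[s = c] = p_{sc} p_{vs}` for all `s`; comparing two entries in distinct columns `c₁, c₂`
gives `λ^(2 + [v₂ = c₁] + [v₁ = c₂]) = 1`, so as `λ² ≠ 1` one entry points at the other's column.
Three nonzero columns would then form a cycle `u_a ↦ u_b ↦ u_c ↦ u_a` up to nonzero scalars,
giving the nilpotent `x³` a nonzero eigenvalue.
-/

class IsMulAntisymm {M ι : Type*} [Monoid M] (p : ι → ι → M) : Prop where
  diag : ∀ i, p i i = 1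
  mul_swap : ∀ i j, p i j * p j i = 1

lemma IsMulAntisymm.ne_zero {M ι : Type*} [MonoidWithZero M] [Nontrivial M] (p : ι → ι → M)
    [IsMulAntisymm p] (i j : ι) : p i j ≠ 0 :=
  left_ne_zero_of_mul_eq_one (IsMulAntisymm.mul_swap i j)

lemma IsMulAntisymm.apply_eq_self_of_apply_apply_eq_self {M ι : Type*} [Monoid M] {p : ι → ι → M}
    [IsMulAntisymm p] (hp : ∀ i j, i ≠ j → p i j ^ 2 ≠ 1) {σ : ι → ι}
    (hσ : ∀ i j, p (σ i) (σ j) = p i j) {j : ι} (h : σ (σ j) = j) : σ j = j := by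
  by_contra hj
  apply hp j (σ j) (Ne.symm hj)
  have hswap := hσ j (σ j)
  rw [h] at hswap
  rw [sq]
  nth_rw 2 [← hswap]
  exact IsMulAntisymm.mul_swap j (σ j)

lemma exists_cycle_of_linked {ι : Type*} {R : ι → ι → Prop}
    (hR : ∀ a b c d, R a b → R c d → a ≠ c → b = c ∨ d = a) {c₁ c₂ c₃ : ι} (h₁₂ : c₁ ≠ c₂)
    (h₁₃ : c₁ ≠ c₃) (h₂₃ : c₂ ≠ c₃) (h₁ : ∃ v, R c₁ v) (h₂ : ∃ v, R c₂ v) (h₃ : ∃ v, R c₃ v) :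
    ∃ a b c, (∀ s, R a s ↔ s = b) ∧ (∀ s, R b s ↔ s = c) ∧ (∀ s, R c s ↔ s = a) := by
  have cycle : ∀ a b c, a ≠ b → a ≠ c → b ≠ c → R a b → (∃ v, R b v) → (∃ v, R c v) →
      (∀ s, R a s ↔ s = b) ∧ (∀ s, R b s ↔ s = c) ∧ (∀ s, R c s ↔ s = a) := by
    rintro a b c hab hac hbc hRab ⟨v, hRbv⟩ ⟨w, hRcw⟩
    have hRca : R c a := (hR a b c w hRab hRcw hac).resolve_left hbc ▸ hRcw
    have hRbc : R b c := (hR b v c a hRbv hRca hbc).resolve_right hab ▸ hRbv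
    refine ⟨fun s => ⟨fun hs => ?_, ?_⟩, fun s => ⟨fun hs => ?_, ?_⟩, fun s => ⟨fun hs => ?_, ?_⟩⟩
    · exact (hR a s b c hs hRbc hab).resolve_right hac.symm
    · rintro rfl; exact hRab
    · exact (hR b s c a hs hRca hbc).resolve_right hab
    · rintro rfl; exact hRbc
    · exact (hR c s a b hs hRab hac.symm).resolve_right hbc
    · rintro rfl; exact hRca
  obtain ⟨v, hv⟩ := h₁
  obtain ⟨w, hw⟩ := h₂
  rcases hR c₁ v c₂ w hv hw h₁₂ with rfl | rfl
  · exact ⟨_, _, _, cycle _ _ _ h₁₂ h₁₃ h₂₃ hv ⟨w, hw⟩ h₃⟩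
  · exact ⟨_, _, _, cycle _ _ _ h₁₂.symm h₂₃ h₁₃ hw ⟨v, hv⟩ h₃⟩

noncomputable section

namespace QAS

open MvPolynomial

variable {k : Type} [Field k] {t : ℕ} (p : Fin t → Fin t → k)

lemma u_mul_u (i j : Fin t) : u k p i * u k p j = p i j • (u k p j * u k p i) := by
  have h := RingQuot.mkAlgHom_rel k (QASRel.rel (p := p) i j)
  rwa [map_mul, map_smul, map_mul] at h

def linComb (c : Fin t → k) : QAS k p := ∑ s, c s • u k p s

lemma linComb_eq_smul_u {c : Fin t → k} {r : Fin t} (hc : ∀ s, s ≠ r → c s = 0) :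
    linComb p c = c r • u k p r :=
  Fintype.sum_eq_single r fun s hs => by rw [hc s hs, zero_smul]

lemma linComb_single (j : Fin t) (c : k) : linComb p (Pi.single j c) = c • u k p j := by
  rw [linComb_eq_smul_u p (r := j) fun s hs => by simp [hs], Pi.single_eq_same]

lemma u_eq_linComb (j : Fin t) : u k p j = linComb p (Pi.single j 1) := by
  rw [linComb_single, one_smul]

-- `u a * u b = orderFactor p a b • (u a * u b with the indices in increasing order)`
def orderFactor (a b : Fin t) : k := if b < a then p a b else 1

@[simp] lemma orderFactor_self (a : Fin t) : orderFactor p a a = 1 := by simp [orderFactor]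

-- `u i` acts on `k[X]` by `f ↦ X i * twist p i f`; evaluated at `1`, this sends each monomial in
-- the `u`'s to a nonzero multiple of the commutative one, which gives coordinates on `QAS k p`.
def twist (i : Fin t) : MvPolynomial (Fin t) k →ₐ[k] MvPolynomial (Fin t) k :=
  aeval fun s => C (orderFactor p i s) * X s

lemma twist_comm (i j : Fin t) :
    (twist p i).comp (twist p j) = (twist p j).comp (twist p i) := by
  ext s
  simp only [twist, aeval_eq_bind₁, AlgHom.coe_comp, Function.comp_apply, bind₁_X_right, map_mul,
    algHom_C, algebraMap_eq, coeff_C_mul]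
  ring

def mulTwist (i : Fin t) : Module.End k (MvPolynomial (Fin t) k) :=
  LinearMap.mulLeft k (X i) ∘ₗ (twist p i).toLinearMap

variable [IsMulAntisymm p]

lemma orderFactor_ne_zero (a b : Fin t) : orderFactor p a b ≠ 0 := by
  unfold orderFactor
  split_ifs
  · exact IsMulAntisymm.ne_zero p a b
  · exact one_ne_zero

lemma orderFactor_eq_mul (i j : Fin t) : orderFactor p i j = p i j * orderFactor p j i := by
  rcases lt_trichotomy i j with h | rfl | h
  · simp [orderFactor, h, h.not_gt, IsMulAntisymm.mul_swap i j]
  · simp [IsMulAntisymm.diag i]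
  · simp [orderFactor, h, h.not_gt]

lemma mulTwist_comm (i j : Fin t) :
    mulTwist p i * mulTwist p j = p i j • (mulTwist p j * mulTwist p i) := by
  refine LinearMap.ext fun f => ?_
  have hc := AlgHom.congr_fun (twist_comm p i j) f
  simp only [AlgHom.comp_apply] at hc
  simp only [mulTwist, Module.End.mul_apply, LinearMap.comp_apply, AlgHom.toLinearMap_apply,
    LinearMap.mulLeft_apply, map_mul, LinearMap.smul_apply, hc]
  simp only [twist, aeval_eq_bind₁, bind₁_X_right, orderFactor_eq_mul p i j, C_mul,
    Algebra.smul_def, algebraMap_eq]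
  ring

def polyRep : QAS k p →ₐ[k] Module.End k (MvPolynomial (Fin t) k) :=
  RingQuot.liftAlgHom k ⟨FreeAlgebra.lift k (mulTwist p), by
    rintro _ _ ⟨i, j⟩
    simp only [map_mul, map_smul, FreeAlgebra.lift_ι_apply]
    exact mulTwist_comm p i j⟩

def toPoly : QAS k p →ₗ[k] MvPolynomial (Fin t) k :=
  LinearMap.applyₗ 1 ∘ₗ (polyRep p).toLinearMap

lemma toPoly_u_mul (i : Fin t) (z : QAS k p) :
    toPoly p (u k p i * z) = X i * twist p i (toPoly p z) := by
  simp [toPoly, u, polyRep, mulTwist]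

lemma toPoly_u (i : Fin t) : toPoly p (u k p i) = X i := by
  simpa [toPoly] using toPoly_u_mul p i 1

lemma toPoly_u_mul_u (a b : Fin t) :
    toPoly p (u k p a * u k p b) =
      monomial (Finsupp.single a 1 + Finsupp.single b 1) (orderFactor p a b) := by
  rw [toPoly_u_mul, toPoly_u, twist, aeval_X, X, X, C_mul_monomial, monomial_mul, one_mul,
    mul_one]

lemma toPoly_linComb_mul_linComb (A B : Fin t → k) :
    toPoly p (linComb p A * linComb p B) = ∑ s, ∑ r,
      monomial (Finsupp.single s 1 + Finsupp.single r 1) (A s * B r * orderFactor p s r) := by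
  simp only [linComb, Finset.sum_mul_sum, smul_mul_smul_comm, map_sum, map_smul, toPoly_u_mul_u,
    smul_monomial, smul_eq_mul]

def coord (s : Fin t) : QAS k p →ₗ[k] k := lcoeff k (Finsupp.single s 1) ∘ₗ toPoly p

def quadCoeff (w v : Fin t) : QAS k p →ₗ[k] k :=
  lcoeff k (Finsupp.single w 1 + Finsupp.single v 1) ∘ₗ toPoly p

lemma coord_u (s r : Fin t) : coord p s (u k p r) = if r = s then 1 else 0 := by
  simp [coord, toPoly_u, coeff_X, Finsupp.single_eq_single_iff]

lemma coord_linComb (c : Fin t → k) (s : Fin t) : coord p s (linComb p c) = c s := by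
  simp [linComb, coord_u]

lemma u_ne_zero (i : Fin t) : u k p i ≠ 0 := by
  intro h
  simpa [h] using coord_u p i i

lemma u_mul_u_ne_zero (a b : Fin t) : u k p a * u k p b ≠ 0 := by
  intro h
  simpa [h, orderFactor_ne_zero] using (toPoly_u_mul_u p a b).symm

lemma linComb_coord {v : QAS k p} (hv : v ∈ Submodule.span k (Set.range (u k p))) :
    linComb p (fun s => coord p s v) = v := by
  obtain ⟨c, rfl⟩ := (Finsupp.mem_span_range_iff_exists_finsupp).1 hv
  rw [Finsupp.sum_fintype _ _ fun i => zero_smul k (u k p i)]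
  exact congrArg (linComb p) (funext (coord_linComb p c))

lemma single_add_single_eq_iff {a s w v : Fin t} :
    Finsupp.single a 1 + Finsupp.single s 1 = Finsupp.single w 1 + Finsupp.single v 1 ↔
      (a = w ∧ s = v) ∨ (a = v ∧ s = w) := by
  rw [Finsupp.single_add_single_eq_single_add_single one_ne_zero one_ne_zero]
  simp

lemma quadCoeff_linComb_mul_linComb_self (A B : Fin t → k) (w : Fin t) :
    quadCoeff p w w (linComb p A * linComb p B) = A w * B w := by
  simp [quadCoeff, toPoly_linComb_mul_linComb, coeff_monomial, single_add_single_eq_iff, ite_and]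

lemma quadCoeff_linComb_mul_linComb {w v : Fin t} (hwv : w ≠ v) (A B : Fin t → k) :
    quadCoeff p w v (linComb p A * linComb p B) =
      A w * B v * orderFactor p w v + A v * B w * orderFactor p v w := by
  simp only [quadCoeff, LinearMap.comp_apply, toPoly_linComb_mul_linComb, lcoeff_apply,
    coeff_sum, coeff_monomial, single_add_single_eq_iff]
  rw [Fintype.sum_eq_add w v hwv]
  · simp [hwv, hwv.symm]
  · intro s hs
    simp [hs.1, hs.2]

def entry (f : QAS k p → QAS k p) (s j : Fin t) : k := coord p s (f (u k p j))

lemma linComb_entry {f : QAS k p → QAS k p} {j : Fin t}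
    (hf : f (u k p j) ∈ Submodule.span k (Set.range (u k p))) :
    linComb p (fun s => entry p f s j) = f (u k p j) :=
  linComb_coord p hf

section Automorphism

variable {p} (hp : ∀ i j, i ≠ j → p i j ≠ 1) {φ : QAS k p →ₐ[k] QAS k p}
include hp

lemma entry_mul_entry_eq_zero (w : Fin t) {i j : Fin t} (hij : i ≠ j)
    (hV : ∀ j, φ (u k p j) ∈ Submodule.span k (Set.range (u k p))) :
    entry p φ w i * entry p φ w j = 0 := by
  have h := congrArg (quadCoeff p w w) (congrArg φ (u_mul_u p i j))
  simp only [map_mul, map_smul] at h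
  rw [← linComb_entry p (hV i), ← linComb_entry p (hV j), quadCoeff_linComb_mul_linComb_self,
    quadCoeff_linComb_mul_linComb_self, smul_eq_mul] at h
  have h' : (1 - p i j) * (entry p φ w i * entry p φ w j) = 0 := by linear_combination h
  exact (mul_eq_zero.1 h').resolve_left (sub_ne_zero.2 (hp i j hij).symm)

theorem exists_perm_of_injective (hφ : Function.Injective φ)
    (hV : ∀ j, φ (u k p j) ∈ Submodule.span k (Set.range (u k p))) :
    ∃ (σ : Equiv.Perm (Fin t)) (α : Fin t → k), (∀ j, α j ≠ 0) ∧
      ∀ j, φ (u k p j) = α j • u k p (σ j) := by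
  have hcol : ∀ j, ∃ s, entry p φ s j ≠ 0 := by
    intro j
    by_contra! h
    apply u_ne_zero p j
    apply hφ
    rw [map_zero, ← linComb_entry p (hV j), linComb_eq_smul_u p (r := j) fun s _ => h s, h j,
      zero_smul]
  choose τ hτ using hcol
  have hτinj : Function.Injective τ := by
    intro i j hτij
    by_contra hij
    exact mul_ne_zero (hτij ▸ hτ i) (hτ j) (entry_mul_entry_eq_zero hp (τ j) hij hV)
  have hτbij : Function.Bijective τ := Finite.injective_iff_bijective.1 hτinj
  have hsupp : ∀ s j, s ≠ τ j → entry p φ s j = 0 := by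
    intro s j hs
    obtain ⟨i, rfl⟩ := hτbij.2 s
    have hij : i ≠ j := fun h => hs (h ▸ rfl)
    exact (mul_eq_zero.1 (entry_mul_entry_eq_zero hp (τ i) hij hV)).resolve_left (hτ i)
  refine ⟨Equiv.ofBijective τ hτbij, fun j => entry p φ (τ j) j, hτ, fun j => ?_⟩
  rw [← linComb_entry p (hV j), linComb_eq_smul_u p (hsupp · j)]
  rfl

end Automorphism

lemma p_apply_eq_of_map_u {φ : QAS k p →ₐ[k] QAS k p} {σ : Fin t → Fin t} {α : Fin t → k}
    (hα : ∀ j, α j ≠ 0) (hφ : ∀ j, φ (u k p j) = α j • u k p (σ j)) (i j : Fin t) :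
    p (σ i) (σ j) = p i j := by
  have h := congrArg φ (u_mul_u p i j)
  rw [map_mul, map_smul, map_mul, hφ, hφ, smul_mul_smul_comm, smul_mul_smul_comm,
    u_mul_u p (σ i), smul_smul, smul_smul] at h
  have h' := smul_left_injective k (u_mul_u_ne_zero p (σ j) (σ i)) h
  exact mul_left_cancel₀ (mul_ne_zero (hα i) (hα j)) (by linear_combination h')

end QAS

namespace TaftAction

variable {k : Type} [Field k] {n m : ℕ} {lam gam : k}

lemma x_one {A : Type} [Ring A] [Algebra k A] (T : TaftAction k n m lam gam A) : T.x 1 = 0 := by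
  simpa using T.skew 1 1

lemma isNilpotent_x {A : Type} [Ring A] [Algebra k A] (T : TaftAction k n m lam 0 A) :
    IsNilpotent T.x :=
  ⟨m, by rw [T.x_pow, zero_smul]⟩

open QAS

variable {t : ℕ} {p : Fin t → Fin t → k} (T : TaftAction k n m lam gam (QAS k p))

lemma x_eq_zero_of_x_u (h : ∀ j, T.x (u k p j) = 0) : T.x = 0 := by
  refine LinearMap.ext fun z => ?_
  obtain ⟨y, rfl⟩ := RingQuot.mkAlgHom_surjective k (QASRel k p) z
  induction y using FreeAlgebra.induction with
  | grade0 r =>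
    rw [AlgHom.commutes, Algebra.algebraMap_eq_smul_one, map_smul, x_one, smul_zero,
      LinearMap.zero_apply]
  | grade1 i => exact h i
  | mul _ _ hy₁ hy₂ => simp_all [T.skew]
  | add _ _ hy₁ hy₂ => simp_all

lemma skew_u_mul_u (i j : Fin t) :
    T.g (u k p i) * T.x (u k p j) + T.x (u k p i) * u k p j =
      p i j • (T.g (u k p j) * T.x (u k p i) + T.x (u k p j) * u k p i) := by
  rw [← T.skew, ← T.skew, u_mul_u, map_smul]

section Monomial

variable [IsMulAntisymm p] {σ : Equiv.Perm (Fin t)} {α : Fin t → k}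
  (hg : ∀ j, T.g (u k p j) = α j • u k p (σ j))
  (hx : ∀ j, T.x (u k p j) ∈ Submodule.span k (Set.range (u k p)))
include hg hx

lemma entry_x_comm (s j : Fin t) :
    α s * entry p T.x s j = lam * α j * entry p T.x (σ s) (σ j) := by
  have h := congrArg (coord p (σ s)) (T.comm (u k p j))
  rw [hg, map_smul, map_smul, map_smul, ← linComb_entry p (hx j), linComb, map_sum] at h
  simp only [map_smul, hg, map_sum, coord_u, EmbeddingLike.apply_eq_iff_eq, smul_eq_mul, mul_ite,
    mul_one, mul_zero, Finset.sum_ite_eq', Finset.mem_univ, ↓reduceIte] at h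
  unfold entry at h ⊢
  linear_combination h

lemma quadCoeff_skew_u_mul_u_self (i j w : Fin t) :
    (if w = σ i then α i else 0) * entry p T.x w j + entry p T.x w i * (if w = j then 1 else 0) =
      p i j * ((if w = σ j then α j else 0) * entry p T.x w i +
        entry p T.x w j * (if w = i then 1 else 0)) := by
  have h := congrArg (quadCoeff p w w) (T.skew_u_mul_u i j)
  rw [hg, hg, ← linComb_single, ← linComb_single, ← linComb_entry p (hx i),
    ← linComb_entry p (hx j), u_eq_linComb p i, u_eq_linComb p j] at h
  simpa only [map_add, map_smul, quadCoeff_linComb_mul_linComb_self, smul_eq_mul,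
    Pi.single_apply] using h

lemma quadCoeff_skew_u_mul_u (i j : Fin t) {w v : Fin t} (hwv : w ≠ v) :
    (if w = σ i then α i else 0) * entry p T.x v j * orderFactor p w v +
        (if v = σ i then α i else 0) * entry p T.x w j * orderFactor p v w +
      (entry p T.x w i * (if v = j then 1 else 0) * orderFactor p w v +
        entry p T.x v i * (if w = j then 1 else 0) * orderFactor p v w) =
      p i j * ((if w = σ j then α j else 0) * entry p T.x v i * orderFactor p w v +
          (if v = σ j then α j else 0) * entry p T.x w i * orderFactor p v w +
        (entry p T.x w j * (if v = i then 1 else 0) * orderFactor p w v +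
          entry p T.x v j * (if w = i then 1 else 0) * orderFactor p v w)) := by
  have h := congrArg (quadCoeff p w v) (T.skew_u_mul_u i j)
  rw [hg, hg, ← linComb_single, ← linComb_single, ← linComb_entry p (hx i),
    ← linComb_entry p (hx j), u_eq_linComb p i, u_eq_linComb p j] at h
  simpa only [map_add, map_smul, quadCoeff_linComb_mul_linComb p hwv, smul_eq_mul,
    Pi.single_apply] using h

section Moved

variable (hα : ∀ j, α j ≠ 0)
include hα

lemma entry_x_apply_eq_zero {i j : Fin t} (hi : σ i ≠ i) (hji : j ≠ i) (hj : j ≠ σ i) :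
    entry p T.x (σ i) j = 0 := by
  have h := T.quadCoeff_skew_u_mul_u_self hg hx i j (σ i)
  simpa [hi, hj.symm, hji.symm, σ.injective.eq_iff, hα i] using h

variable (hσ₂ : ∀ j, σ (σ j) = j → σ j = j) (hlam : lam ≠ 1)
include hσ₂ hlam

lemma entry_x_self_eq_zero (j : Fin t) : entry p T.x j j = 0 := by
  have hcomm := T.entry_x_comm hg hx j j
  suffices entry p T.x (σ j) (σ j) = entry p T.x j j by
    rw [this] at hcomm
    have h : (1 - lam) * (α j * entry p T.x j j) = 0 := by linear_combination hcomm
    simpa [sub_eq_zero, hlam.symm, hα j] using h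
  by_cases hj : σ j = j
  · rw [hj]
  have hσσ : σ (σ j) ≠ j := fun h => hj (hσ₂ j h)
  have hj' : entry p T.x j (σ j) = 0 := by
    simpa using T.entry_x_apply_eq_zero hg hx hα (i := σ.symm j)
      (by simpa [Equiv.eq_symm_apply] using hj)
      (by simpa [Equiv.eq_symm_apply] using hσσ)
      (by simpa using hj)
  have h := T.quadCoeff_skew_u_mul_u hg hx (σ j) j hj
  simp only [EmbeddingLike.apply_eq_iff_eq, Ne.symm hj, ↓reduceIte, zero_mul,
    orderFactor_eq_mul p (σ j) j, hσσ.symm, add_zero, mul_one, hj', mul_ite, mul_zero, ite_self,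
    zero_add] at h
  refine mul_right_cancel₀ (mul_ne_zero (IsMulAntisymm.ne_zero p (σ j) j)
    (orderFactor_ne_zero p j (σ j))) ?_
  linear_combination h

lemma entry_x_apply_self_eq_zero {j : Fin t} (hj : σ j ≠ j) :
    entry p T.x (σ j) j = 0 := by
  have h := T.quadCoeff_skew_u_mul_u_self hg hx (σ j) j (σ j)
  simpa [hj, Ne.symm hj, σ.injective.eq_iff, T.entry_x_self_eq_zero hg hx hα hσ₂ hlam,
    IsMulAntisymm.ne_zero] using h

lemma entry_x_eq_zero_of_apply_ne {w : Fin t} (hw : σ w ≠ w) (j : Fin t) :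
    entry p T.x w j = 0 := by
  obtain ⟨i, rfl⟩ := σ.surjective w
  have hi : σ i ≠ i := fun h => hw (congrArg σ h)
  by_cases hjw : j = σ i
  · exact hjw ▸ T.entry_x_self_eq_zero hg hx hα hσ₂ hlam (σ i)
  by_cases hji : j = i
  · subst hji
    exact T.entry_x_apply_self_eq_zero hg hx hα hσ₂ hlam hi
  exact T.entry_x_apply_eq_zero hg hx hα hi hji hjw

lemma entry_x_eq_zero_of_apply_eq (hσ : σ ≠ 1) {w : Fin t} (hw : σ w = w)
    (j : Fin t) : entry p T.x w j = 0 := by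
  by_cases hjw : j = w
  · exact hjw ▸ T.entry_x_self_eq_zero hg hx hα hσ₂ hlam w
  obtain ⟨i, hi, hij, hσij⟩ : ∃ i, σ i ≠ i ∧ i ≠ j ∧ σ i ≠ j := by
    by_cases hj : σ j = j
    · obtain ⟨i, hi⟩ : ∃ i, σ i ≠ i := by
        by_contra! h
        exact hσ (Equiv.ext h)
      refine ⟨i, hi, by rintro rfl; exact hi hj, fun h => ?_⟩
      obtain rfl := σ.injective (h.trans hj.symm)
      exact hi h
    · exact ⟨σ j, fun h => hj (σ.injective h), hj, fun h => hj (hσ₂ j h)⟩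
  have hiw : σ i ≠ w := by
    intro h
    obtain rfl := σ.injective (h.trans hw.symm)
    exact hi hw
  have hwi : w ≠ i := by
    rintro rfl
    exact hiw hw
  have hwj : w ≠ σ j := fun h => hjw (σ.injective (hw.trans h)).symm
  -- the coefficient of `u (σ i) * u w` in `x (u i * u j)` only sees `entry w j`
  have h := T.quadCoeff_skew_u_mul_u hg hx i j hiw
  simpa [hi, hij, hσij, Ne.symm hjw, Ne.symm hiw, hwi, hwj, hα i, orderFactor_ne_zero] using h

theorem x_eq_zero_of_perm_ne_one (hσ : σ ≠ 1) : T.x = 0 := by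
  refine T.x_eq_zero_of_x_u fun j => ?_
  have hcol : (fun w => entry p T.x w j) = 0 := funext fun w => by
    by_cases hw : σ w = w
    · exact T.entry_x_eq_zero_of_apply_eq hg hx hα hσ₂ hlam hσ hw j
    · exact T.entry_x_eq_zero_of_apply_ne hg hx hα hσ₂ hlam hw j
  rw [← linComb_entry p (hx j), hcol]
  simp [linComb]

end Moved

end Monomial

section Diagonal

variable [IsMulAntisymm p] {α : Fin t → k} (hg : ∀ j, T.g (u k p j) = α j • u k p j)
  (hx : ∀ j, T.x (u k p j) ∈ Submodule.span k (Set.range (u k p))) (hα : ∀ j, α j ≠ 0)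
  (hlam : lam ≠ 1)
include hg hx hα hlam

lemma entry_x_self_eq_zero_of_diag (j : Fin t) : entry p T.x j j = 0 :=
  T.entry_x_self_eq_zero (σ := 1) hg hx hα (fun _ _ => rfl) hlam j

lemma alpha_eq_of_entry_x_ne_zero {v c : Fin t} (hvc : entry p T.x v c ≠ 0) (s : Fin t) :
    α s * (if s = c then lam else 1) = p s c * p v s := by
  have hv : v ≠ c := fun h => hvc (h ▸ T.entry_x_self_eq_zero_of_diag hg hx hα hlam v)
  have hcomm : α v = lam * α c := by
    have h := T.entry_x_comm (σ := 1) hg hx v c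
    exact mul_right_cancel₀ hvc (by simpa using h)
  have hrow : α v = p v c := by
    have h := T.quadCoeff_skew_u_mul_u_self (σ := 1) hg hx v c v
    simpa [hv, hvc] using h
  by_cases hsc : s = c
  · subst hsc
    simp [IsMulAntisymm.diag, ← hrow, hcomm, mul_comm]
  by_cases hsv : s = v
  · subst hsv
    simp [IsMulAntisymm.diag, hsc, hrow]
  have h := T.quadCoeff_skew_u_mul_u (σ := 1) hg hx s c hsv
  simp only [Equiv.Perm.coe_one, id_eq, ↓reduceIte, orderFactor_eq_mul p s v, Ne.symm hsv,
    zero_mul, add_zero, hv, mul_zero, hsc, mul_one, zero_add] at h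
  have hs : α s * p s v = p s c :=
    mul_right_cancel₀ (mul_ne_zero hvc (orderFactor_ne_zero p v s)) (by linear_combination h)
  rw [if_neg hsc, mul_one]
  linear_combination p v s * hs - α s * IsMulAntisymm.mul_swap (p := p) s v

lemma lam_sq_mul_eq_one {c₁ v₁ c₂ v₂ : Fin t} (hc : c₁ ≠ c₂) (h₁ : entry p T.x v₁ c₁ ≠ 0)
    (h₂ : entry p T.x v₂ c₂ ≠ 0) :
    lam ^ 2 * (if v₂ = c₁ then lam else 1) * (if v₁ = c₂ then lam else 1) = 1 := by
  have hv₁ : v₁ ≠ c₁ := fun h => h₁ (h ▸ T.entry_x_self_eq_zero_of_diag hg hx hα hlam v₁)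
  have hv₂ : v₂ ≠ c₂ := fun h => h₂ (h ▸ T.entry_x_self_eq_zero_of_diag hg hx hα hlam v₂)
  have H₁ := T.alpha_eq_of_entry_x_ne_zero hg hx hα hlam h₁
  have H₂ := T.alpha_eq_of_entry_x_ne_zero hg hx hα hlam h₂
  have e₁ := H₁ c₁
  have e₂ := H₁ v₂
  have e₃ := H₁ c₂
  have e₄ := H₁ v₁
  have f₁ := H₂ c₁
  have f₂ := H₂ v₂
  have f₃ := H₂ c₂
  have f₄ := H₂ v₁
  simp only [if_pos, if_neg hc, if_neg hc.symm, if_neg hv₁, if_neg hv₂, mul_one]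
    at e₁ e₃ e₄ f₁ f₂ f₃
  have hA : α c₁ * α v₂ * α c₂ * α v₁ ≠ 0 := by simp [hα]
  refine mul_left_cancel₀ hA ?_
  simp only [IsMulAntisymm.diag, one_mul, mul_one] at e₁ e₂ e₃ e₄ f₁ f₂ f₃ f₄ ⊢
  calc α c₁ * α v₂ * α c₂ * α v₁ *
        (lam ^ 2 * (if v₂ = c₁ then lam else 1) * (if v₁ = c₂ then lam else 1))
      = (α c₁ * lam) * (α v₂ * (if v₂ = c₁ then lam else 1)) * (α c₂ * lam) *
          (α v₁ * (if v₁ = c₂ then lam else 1)) := by ring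
    _ = p v₁ c₁ * (p v₂ c₁ * p v₁ v₂) * p v₂ c₂ * (p v₁ c₂ * p v₂ v₁) := by rw [e₁, e₂, f₃, f₄]
    _ = p c₁ c₂ * p v₂ c₁ * p v₂ c₂ * (p c₂ c₁ * p v₁ c₂) * p v₁ c₁ := by
      linear_combination (p v₁ c₁ * p v₂ c₁ * p v₂ c₂ * p v₁ c₂) *
        (IsMulAntisymm.mul_swap (p := p) v₁ v₂ - IsMulAntisymm.mul_swap (p := p) c₁ c₂)
    _ = α c₁ * α v₂ * α c₂ * α v₁ := by rw [← f₁, ← f₂, ← e₃, ← e₄]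

lemma eq_or_eq_of_entry_x_ne_zero (hlam₂ : lam ^ 2 ≠ 1) {c₁ v₁ c₂ v₂ : Fin t}
    (h₁ : entry p T.x v₁ c₁ ≠ 0) (h₂ : entry p T.x v₂ c₂ ≠ 0) (hc : c₁ ≠ c₂) :
    v₁ = c₂ ∨ v₂ = c₁ := by
  by_contra! h
  have := T.lam_sq_mul_eq_one hg hx hα hlam hc h₁ h₂
  rw [if_neg h.2, if_neg h.1, mul_one, mul_one] at this
  exact hlam₂ this

theorem false_of_three_x_u_ne_zero (hlam₂ : lam ^ 2 ≠ 1) (hnil : IsNilpotent T.x)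
    {c₁ c₂ c₃ : Fin t} (h₁₂ : c₁ ≠ c₂) (h₁₃ : c₁ ≠ c₃) (h₂₃ : c₂ ≠ c₃) (h₁ : T.x (u k p c₁) ≠ 0)
    (h₂ : T.x (u k p c₂) ≠ 0) (h₃ : T.x (u k p c₃) ≠ 0) : False := by
  have hcol : ∀ c, T.x (u k p c) ≠ 0 → ∃ v, entry p T.x v c ≠ 0 := by
    intro c hc
    by_contra! h
    rw [← linComb_entry p (hx c)] at hc
    simp [h, linComb] at hc
  obtain ⟨a, b, c, hab, hbc, hca⟩ := exists_cycle_of_linked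
    (fun c₁ v₁ c₂ v₂ h₁ h₂ hc => T.eq_or_eq_of_entry_x_ne_zero hg hx hα hlam hlam₂ h₁ h₂ hc)
    h₁₂ h₁₃ h₂₃ (hcol c₁ h₁) (hcol c₂ h₂) (hcol c₃ h₃)
  have hxu : ∀ c d, (∀ s, entry p T.x s c ≠ 0 ↔ s = d) →
      T.x (u k p c) = entry p T.x d c • u k p d ∧ entry p T.x d c ≠ 0 := fun c d hcd =>
    ⟨by rw [← linComb_entry p (hx c), linComb_eq_smul_u p fun s hs => not_not.1 (mt (hcd s).1 hs)],
      (hcd d).2 rfl⟩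
  obtain ⟨hxa, ha⟩ := hxu a b hab
  obtain ⟨hxb, hb⟩ := hxu b c hbc
  obtain ⟨hxc, hc⟩ := hxu c a hca
  have hev : (T.x ^ 3).HasEigenvector (entry p T.x b a * entry p T.x c b * entry p T.x a c)
      (u k p a) := by
    refine Module.End.hasEigenvector_iff.2 ⟨Module.End.mem_eigenspace_iff.2 ?_, u_ne_zero p a⟩
    simp [pow_succ, hxa, hxb, hxc, smul_smul, mul_comm, mul_left_comm]
  have := (Module.End.hasEigenvalue_of_hasEigenvector hev).isNilpotent_of_isNilpotent
    (hnil.pow_succ 2)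
  exact mul_ne_zero (mul_ne_zero ha hb) hc this.eq_zero

end Diagonal

end TaftAction

end

theorem stmt_5_general {k : Type} [Field k] {t : ℕ} (ht : 3 ≤ t)
    (p : Fin t → Fin t → k)
    (hp1 : ∀ i, p i i = 1) (hpa : ∀ i j, p i j * p j i = 1)
    (hpord : ∀ i j, i ≠ j → 3 ≤ orderOf (p i j))
    {n m : ℕ} (hm3 : 3 ≤ m) {lam : k} (hlam : IsPrimitiveRoot lam m)
    (T : TaftAction k n m lam 0 (QAS k p))
    (hling : ∀ a ∈ Submodule.span k (Set.range (QAS.u k p)),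
      T.g a ∈ Submodule.span k (Set.range (QAS.u k p)))
    (hlinx : ∀ a ∈ Submodule.span k (Set.range (QAS.u k p)),
      T.x a ∈ Submodule.span k (Set.range (QAS.u k p)))
    (hif : T.InnerFaithful) :
    (∃ i j : Fin t, i ≠ j ∧ ∀ l : Fin t, l ≠ i → l ≠ j → T.x (QAS.u k p l) = 0) ∨
    (∃ i j l : Fin t, i ≠ j ∧ j ≠ l ∧ i ≠ l ∧
      (∃ α : Fin t → k, ∀ s, T.g (QAS.u k p s) = α s • QAS.u k p s) ∧
      (∃ c : k, c ≠ 0 ∧ T.x (QAS.u k p j) = c • QAS.u k p i) ∧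
      (∃ c : k, c ≠ 0 ∧ T.x (QAS.u k p l) = c • QAS.u k p j) ∧
      (∀ s : Fin t, s ≠ j → s ≠ l → T.x (QAS.u k p s) = 0)) := by
  have : IsMulAntisymm p := ⟨hp1, hpa⟩
  have hp₁ : ∀ i j, i ≠ j → p i j ≠ 1 := fun i j hij => by
    simpa using pow_ne_one_of_lt_orderOf one_ne_zero (by linarith [hpord i j hij])
  have hp₂ : ∀ i j, i ≠ j → p i j ^ 2 ≠ 1 := fun i j hij =>
    pow_ne_one_of_lt_orderOf two_ne_zero (by linarith [hpord i j hij])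
  have hlam₁ : lam ≠ 1 := by simpa using hlam.pow_ne_one_of_pos_of_lt one_ne_zero (by omega)
  have hlam₂ : lam ^ 2 ≠ 1 := hlam.pow_ne_one_of_pos_of_lt two_ne_zero (by omega)
  have hV : ∀ j, T.g.toAlgHom (QAS.u k p j) ∈ Submodule.span k (Set.range (QAS.u k p)) :=
    fun j => hling _ (Submodule.subset_span (Set.mem_range_self j))
  have hX : ∀ j, T.x (QAS.u k p j) ∈ Submodule.span k (Set.range (QAS.u k p)) :=
    fun j => hlinx _ (Submodule.subset_span (Set.mem_range_self j))
  obtain ⟨σ, α, hα, hg⟩ := QAS.exists_perm_of_injective hp₁ T.g.injective hV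
  have hσ₂ : ∀ j, σ (σ j) = j → σ j = j := fun j =>
    IsMulAntisymm.apply_eq_self_of_apply_apply_eq_self hp₂ (QAS.p_apply_eq_of_map_u p hα hg)
  obtain rfl : σ = 1 := by
    by_contra hσ
    exact hif.1 (T.x_eq_zero_of_perm_ne_one hg hX hα hσ₂ hlam₁ hσ)
  left
  by_contra! h
  obtain ⟨c₁, h₁₀, -, hx₁⟩ := h ⟨0, by omega⟩ ⟨1, by omega⟩ (by simp [Fin.ext_iff])
  obtain ⟨c₂, h₂₁, -, hx₂⟩ := h c₁ ⟨0, by omega⟩ h₁₀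
  obtain ⟨c₃, h₃₁, h₃₂, hx₃⟩ := h c₁ c₂ h₂₁.symm
  exact T.false_of_three_x_u_ne_zero hg hX hα hlam₁ hlam₂ T.isNilpotent_x h₂₁.symm h₃₁.symm
    h₃₂.symm hx₁ hx₂ hx₃

/-- Suppose the generalized Taft algebra `T_n(λ,m,0)` acts linearly and
inner faithfully on the quantum affine space `A = k_p[u_1,…,u_t]`, where `m`, `t`, and
`ord(p_{ij})` for all `i ≠ j` are all at least `3`.  Then every such action is a trivial
extension of an action on a quantum plane subalgebra `A_{ij}` (i.e. `x·u_l = 0` for all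
`l ∉ {i,j}`), or of an action on a quantum 3-space subalgebra `A_{ijl}` (i.e. `g` acts
diagonally, `x·u_j` is a nonzero multiple of `u_i`, `x·u_l` is a nonzero multiple of
`u_j`, and `x·u_s = 0` for `s ≠ j, l`). -/
theorem stmt_5 {k : Type} [Field k] {t : ℕ} (ht : 3 ≤ t)
    (p : Fin t → Fin t → k)
    (hp1 : ∀ i, p i i = 1) (hpa : ∀ i j, p i j * p j i = 1)
    (hpord : ∀ i j, i ≠ j → 3 ≤ orderOf (p i j))
    {n m : ℕ} (hm3 : 3 ≤ m) (hmn : m ∣ n) {lam : k} (hlam : IsPrimitiveRoot lam m)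
    (T : TaftAction k n m lam 0 (QAS k p))
    (hling : ∀ a ∈ Submodule.span k (Set.range (QAS.u k p)),
      T.g a ∈ Submodule.span k (Set.range (QAS.u k p)))
    (hlinx : ∀ a ∈ Submodule.span k (Set.range (QAS.u k p)),
      T.x a ∈ Submodule.span k (Set.range (QAS.u k p)))
    (hif : T.InnerFaithful) :
    (∃ i j : Fin t, i ≠ j ∧ ∀ l : Fin t, l ≠ i → l ≠ j → T.x (QAS.u k p l) = 0) ∨
    (∃ i j l : Fin t, i ≠ j ∧ j ≠ l ∧ i ≠ l ∧
      (∃ α : Fin t → k, ∀ s, T.g (QAS.u k p s) = α s • QAS.u k p s) ∧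
      (∃ c : k, c ≠ 0 ∧ T.x (QAS.u k p j) = c • QAS.u k p i) ∧
      (∃ c : k, c ≠ 0 ∧ T.x (QAS.u k p l) = c • QAS.u k p j) ∧
      (∀ s : Fin t, s ≠ j → s ≠ l → T.x (QAS.u k p s) = 0)) :=
  stmt_5_general ht p hp1 hpa hpord hm3 hlam T hling hlinx hif
end

section
/- Suppose the bosonization B = B(G,g,χ) of a quantum linear space has rank θ and acts linearly and inner faithfully on A = k_μ[u,v] or A = A_1^μ(k), where ord(μ) and all m_i are at least 3. Then: (1) ord(μ) divides n_i and each Hopf subalgebra B_i ≅ T_{n_i}(λ_i,m_i,0) acts on A by one of the two classified Taft actions (type (a): g_i·u = μu, g_i·v = λ_i^{-1}μv, x_i·u = 0, x_i·v = η_i u with η_i ∈ k^×; type (b): g_i·u = λ_i^{-1}μ^{-1}u, g_i·v = μ^{-1}v, x_i·u = η_i v, x_i·v = 0); (2) either all B_i act by type (a) or all act by type (b); (3) for all i ≠ j, λ_i = χ_j(g_i). -/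
/-- The defining relation of the algebra `k⟨u,v⟩/(uv - μvu - c)`: for `c = 0` this is the
quantum plane `k_μ[u,v]`, and for `c = 1` it is the quantum Weyl algebra `A_1^μ(k)`. -/
inductive QPWRel (k : Type) [Field k] (μ c : k) :
    FreeAlgebra k (Fin 2) → FreeAlgebra k (Fin 2) → Prop
  | rel : QPWRel k μ c (FreeAlgebra.ι k 0 * FreeAlgebra.ι k 1)
      (μ • (FreeAlgebra.ι k 1 * FreeAlgebra.ι k 0) + algebraMap k (FreeAlgebra k (Fin 2)) c)

/-- The algebra `k⟨u,v⟩/(uv - μvu - c)`. -/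
abbrev QPW (k : Type) [Field k] (μ c : k) : Type := RingQuot (QPWRel k μ c)

/-- The generator `u`. -/
noncomputable def QPW.u (k : Type) [Field k] (μ c : k) : QPW k μ c :=
  RingQuot.mkAlgHom k (QPWRel k μ c) (FreeAlgebra.ι k 0)

/-- The generator `v`. -/
noncomputable def QPW.v (k : Type) [Field k] (μ c : k) : QPW k μ c :=
  RingQuot.mkAlgHom k (QPWRel k μ c) (FreeAlgebra.ι k 1)
/-- Action data for the bosonization `B(G, ĝ, χ̂) = R(g_1,…,g_θ,χ_1,…,χ_θ) # kG` of a
quantum linear space over a finite abelian group `G` on a `k`-algebra `A`: the group `G`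
acts by `k`-algebra automorphisms, each skew-primitive generator `x_i` acts as a
`(g_i,1)`-skew derivation, subject to the defining relations `h·x_i = χ_i(h) x_i·h`,
`x_i x_j = χ_j(g_i) x_j x_i` (`i ≠ j`) and `x_i^{m_i} = 0` with `m_i = ord(χ_i(g_i))`.
Giving such data is the same as making `A` a left `B(G, ĝ, χ̂)`-module algebra. -/
structure BosAction (k : Type) [Field k] (G : Type) [CommGroup G] {θ : ℕ}
    (gs : Fin θ → G) (χs : Fin θ → (G →* k))
    (A : Type) [Ring A] [Algebra k A] where
  ρ : G →* (A ≃ₐ[k] A)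
  x : Fin θ → Module.End k A
  comm : ∀ (i : Fin θ) (h : G) (a : A), ρ h (x i a) = χs i h • x i (ρ h a)
  skew : ∀ (i : Fin θ) (a b : A), x i (a * b) = ρ (gs i) a * x i b + x i a * b
  xx : ∀ (i j : Fin θ), i ≠ j → ∀ a : A, x i (x j a) = χs j (gs i) • x j (x i a)
  x_pow : ∀ i : Fin θ, (x i ^ orderOf (χs i (gs i)) : Module.End k A) = 0

/-- Inner faithfulness of a `B(G, ĝ, χ̂)`-action: no nonzero Hopf ideal of the
bosonization annihilates `A`; concretely, each `x_i` acts by a nonzero operator and the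
group `G` acts faithfully on `A`. -/
def BosAction.InnerFaithful {k : Type} [Field k] {G : Type} [CommGroup G] {θ : ℕ}
    {gs : Fin θ → G} {χs : Fin θ → (G →* k)} {A : Type} [Ring A] [Algebra k A]
    (T : BosAction k G gs χs A) : Prop :=
  (∀ i, T.x i ≠ 0) ∧ Function.Injective T.ρ

/-- Type (a) of the classified generalized Taft algebra actions on `k⟨u,v⟩/(uv-μvu-c)`:
`g·u = μu`, `g·v = λ⁻¹μv`, `x·u = 0`, `x·v = ηu` (`η ≠ 0`), and `λ = μ²` in the Weyl
case `c ≠ 0`. -/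
def FormA {k : Type} [Field k] {μ c : k} (lam : k) (g : QPW k μ c ≃ₐ[k] QPW k μ c)
    (x : Module.End k (QPW k μ c)) : Prop :=
  g (QPW.u k μ c) = μ • QPW.u k μ c ∧ g (QPW.v k μ c) = (lam⁻¹ * μ) • QPW.v k μ c ∧
  x (QPW.u k μ c) = 0 ∧ (∃ η : k, η ≠ 0 ∧ x (QPW.v k μ c) = η • QPW.u k μ c) ∧
  (c ≠ 0 → lam = μ ^ 2)

/-- Type (b) of the classified generalized Taft algebra actions on `k⟨u,v⟩/(uv-μvu-c)`:
`g·u = λ⁻¹μ⁻¹u`, `g·v = μ⁻¹v`, `x·u = ηv` (`η ≠ 0`), `x·v = 0`, and `λ = μ⁻²` in the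
Weyl case `c ≠ 0`. -/
def FormB {k : Type} [Field k] {μ c : k} (lam : k) (g : QPW k μ c ≃ₐ[k] QPW k μ c)
    (x : Module.End k (QPW k μ c)) : Prop :=
  g (QPW.u k μ c) = (lam⁻¹ * μ⁻¹) • QPW.u k μ c ∧ g (QPW.v k μ c) = μ⁻¹ • QPW.v k μ c ∧
  (∃ η : k, η ≠ 0 ∧ x (QPW.u k μ c) = η • QPW.v k μ c) ∧ x (QPW.v k μ c) = 0 ∧
  (c ≠ 0 → lam = (μ ^ 2)⁻¹)

/-!
`k⟨u,v⟩/(uv - μvu - c)` acts on `k[t]` by `v ↦ t·` and `u ↦ σ_μ + c D_μ`, where `σ_μ p(t) = p(μt)`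
and `D_μ` is the Jackson `μ`-derivative; this shows that `u, v` and `1, u², vu, v²` are linearly
independent. Applying a linear automorphism to `uv - μvu = c` then forces it to be diagonal in
`u, v`, and `g x = λ x g` with `λ ≠ 1` forces the skew derivation `x` to swap the lines `ku` and
`kv`, say `x u = b v`, `x v = e u`. The twisted Leibniz rule applied to the defining relation,
together with nilpotency of `x` (`x²` acts on `u` by the scalar `be`), pins down the eigenvalues
of `g` and leaves exactly types (a) and (b). Mixed types are impossible since
`x_i x_j u ≠ 0 = x_j x_i u`, and comparing `g_i x_j` with `x_j g_i` on a generator gives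
`λ_i = χ_j(g_i)`.
-/

theorem LinearMap.eq_zero_of_twisted_leibniz {R A : Type*} [CommRing R] [Ring A] [Algebra R A]
    {s : Set A} (hs : Algebra.adjoin R s = ⊤) (g : A →ₐ[R] A) {X : A →ₗ[R] A}
    (hX : ∀ a b, X (a * b) = g a * X b + X a * b) (h : ∀ a ∈ s, X a = 0) : X = 0 := by
  have hX1 : X 1 = 0 := by simpa using hX 1 1
  ext a
  rw [zero_apply]
  have ha : a ∈ Algebra.adjoin R s := hs ▸ Algebra.mem_top
  induction ha using Algebra.adjoin_induction with
  | mem a ha => exact h a ha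
  | algebraMap r => rw [Algebra.algebraMap_eq_smul_one, map_smul, hX1, smul_zero]
  | add a b _ _ ha hb => rw [map_add, ha, hb, add_zero]
  | mul a b _ _ ha hb => rw [hX, ha, hb, mul_zero, zero_mul, add_zero]

theorem Module.End.mul_eq_zero_of_isNilpotent {K M : Type*} [Field K] [AddCommGroup M]
    [Module K M] {f : Module.End K M} (hf : IsNilpotent f) {x y : M} (hx : x ≠ 0) {b e : K}
    (hfx : f x = b • y) (hfy : f y = e • x) : b * e = 0 := by
  have hvec : (f ^ 2).HasEigenvector (b * e) x := by
    refine hasEigenvector_iff.mpr ⟨mem_eigenspace_iff.mpr ?_, hx⟩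
    rw [sq, mul_apply, hfx, map_smul, hfy, smul_smul]
  exact (hasEigenvalue_of_hasEigenvector hvec).isNilpotent_of_isNilpotent
    (hf.pow_of_pos two_ne_zero) |>.eq_zero

namespace QPW

open Finset

variable {k : Type} [Field k] {μ c : k}

local notation "A₁" => Submodule.span k {u k μ c, v k μ c}

theorem u_mul_v : u k μ c * v k μ c = μ • (v k μ c * u k μ c) + algebraMap k _ c := by
  simpa only [u, v, map_mul, map_add, map_smul, AlgHom.commutes] using
    RingQuot.mkAlgHom_rel k (QPWRel.rel (k := k) (μ := μ) (c := c))

/- `ℕ →₀ k` models `k[t]`; `opU` is `σ_μ + c D_μ` with `D_μ t^n = (1 + μ + ⋯ + μ^{n-1}) t^{n-1}`,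
whose coefficient vanishes for `n = 0`, so the truncated `n - 1` is harmless. -/
noncomputable def opV (k : Type) [Field k] : Module.End k (ℕ →₀ k) :=
  Finsupp.lmapDomain k k (· + 1)

noncomputable def opU (μ c : k) : Module.End k (ℕ →₀ k) :=
  Finsupp.lsum k fun n =>
    μ ^ n • Finsupp.lsingle n + (c * ∑ i ∈ range n, μ ^ i) • Finsupp.lsingle (n - 1)

@[simp]
theorem opV_single (n : ℕ) (r : k) : opV k (Finsupp.single n r) = Finsupp.single (n + 1) r := by
  simp [opV]

@[simp]
theorem opU_single (n : ℕ) (r : k) :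
    opU μ c (Finsupp.single n r) = Finsupp.single n (μ ^ n * r)
      + Finsupp.single (n - 1) (c * (∑ i ∈ range n, μ ^ i) * r) := by
  simp [opU, mul_assoc]

theorem opU_mul_opV : opU μ c * opV k = μ • (opV k * opU μ c) + algebraMap k _ c := by
  refine Finsupp.lhom_ext fun n r => ?_
  cases n with
  | zero => simp [Finsupp.smul_single, add_comm, pow_succ]
  | succ n =>
    simp only [Module.End.mul_apply, LinearMap.add_apply, LinearMap.smul_apply,
      Module.algebraMap_end_apply, opV_single, opU_single, map_add, smul_add, Finsupp.smul_single,
      Nat.add_sub_cancel, geom_sum_succ]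
    ext m
    simp only [Finsupp.add_apply, Finsupp.single_apply]
    split_ifs <;> ring

noncomputable def toEnd : QPW k μ c →ₐ[k] Module.End k (ℕ →₀ k) :=
  RingQuot.liftAlgHom k ⟨FreeAlgebra.lift k ![opU μ c, opV k], by
    rintro _ _ ⟨⟩
    simpa using opU_mul_opV⟩

@[simp]
theorem toEnd_u : toEnd (u k μ c) = opU μ c := by
  simp [toEnd, u]

@[simp]
theorem toEnd_v : toEnd (v k μ c) = opV k := by
  simp [toEnd, v]

theorem linearIndependent_u_v : LinearIndependent k ![u k μ c, v k μ c] := by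
  refine LinearIndependent.pair_iff.mpr fun s t h => ?_
  have h0 := congr($(congrArg toEnd h) (Finsupp.single 0 1))
  simp only [map_add, map_smul, toEnd_u, toEnd_v, map_zero, LinearMap.add_apply,
    LinearMap.smul_apply, opU_single, opV_single, LinearMap.zero_apply] at h0
  exact ⟨by simpa using congr($h0 0), by simpa using congr($h0 1)⟩

theorem u_ne_zero : u k μ c ≠ 0 := by
  simpa using (linearIndependent_u_v (k := k) (μ := μ) (c := c)).ne_zero 0

theorem v_ne_zero : v k μ c ≠ 0 := by
  simpa using (linearIndependent_u_v (k := k) (μ := μ) (c := c)).ne_zero 1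

theorem coeffs_eq_zero_of_quadratic_eq_zero (hμ : μ ^ 2 ≠ 1) {a b d e : k}
    (h : a • (1 : QPW k μ c) + b • (u k μ c * u k μ c) + d • (v k μ c * u k μ c)
      + e • (v k μ c * v k μ c) = 0) :
    a = 0 ∧ b = 0 ∧ d = 0 ∧ e = 0 := by
  have h' := congrArg toEnd h
  have h0 := congr($h' (Finsupp.single 0 1))
  have h1 := congr($h' (Finsupp.single 1 1))
  simp only [map_add, map_smul, map_mul, map_one, toEnd_u, toEnd_v, map_zero, LinearMap.add_apply,
    LinearMap.smul_apply, Module.End.mul_apply, Module.End.one_apply, opU_single, opV_single,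
    LinearMap.zero_apply] at h0 h1
  have h00 : a + b = 0 := by simpa using congr($h0 0)
  have h01 : d = 0 := by simpa using congr($h0 1)
  have h02 : e = 0 := by simpa using congr($h0 2)
  have h11 : a + b * μ ^ 2 + d * c = 0 := by simpa [sq] using congr($h1 1)
  have hb : b = 0 := by
    have : b * (μ ^ 2 - 1) = 0 := by linear_combination h11 - h00 - c * h01
    exact (mul_eq_zero.mp this).resolve_right (sub_ne_zero.mpr hμ)
  exact ⟨by linear_combination h00 - hb, hb, h01, h02⟩

theorem adjoin_u_v : Algebra.adjoin k {u k μ c, v k μ c} = ⊤ := by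
  have hgen : {u k μ c, v k μ c} =
      RingQuot.mkAlgHom k (QPWRel k μ c) '' Set.range (FreeAlgebra.ι k) := by
    ext
    simp [Fin.exists_fin_two, u, v, eq_comm]
  rw [hgen, Algebra.adjoin_image, FreeAlgebra.adjoin_range_ι, Algebra.map_top, AlgHom.range_eq_top]
  exact RingQuot.mkAlgHom_surjective k _

theorem u_mem_span : u k μ c ∈ A₁ :=
  Submodule.subset_span (Set.mem_insert _ _)

theorem v_mem_span : v k μ c ∈ A₁ :=
  Submodule.subset_span (Set.mem_insert_of_mem _ rfl)

theorem exists_eq_smul_of_mapsTo_span (hμ : μ ^ 2 ≠ 1) (f : QPW k μ c ≃ₐ[k] QPW k μ c)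
    (hf : Set.MapsTo f A₁ A₁) :
    ∃ α δ : k, α ≠ 0 ∧ δ ≠ 0 ∧ f (u k μ c) = α • u k μ c ∧ f (v k μ c) = δ • v k μ c ∧
      α * δ * c = c := by
  have hμ1 : (1 : k) - μ ≠ 0 := sub_ne_zero.mpr fun h => hμ (by rw [← h, one_pow])
  obtain ⟨α, β, hu⟩ := Submodule.mem_span_pair.mp (hf u_mem_span)
  obtain ⟨γ, δ, hv⟩ := Submodule.mem_span_pair.mp (hf v_mem_span)
  have hrel := congrArg f (u_mul_v (k := k) (μ := μ) (c := c))
  rw [map_mul, map_add, map_smul, map_mul, AlgEquiv.commutes, ← hu, ← hv] at hrel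
  simp only [add_mul, mul_add, smul_mul_assoc, mul_smul_comm, smul_smul, smul_add] at hrel
  rw [u_mul_v] at hrel
  obtain ⟨h1, huu, hvu, hvv⟩ := coeffs_eq_zero_of_quadratic_eq_zero (c := c) hμ
    (a := (α * δ - μ * β * γ - 1) * c) (b := α * γ * (1 - μ)) (d := β * γ * (1 - μ ^ 2))
    (e := β * δ * (1 - μ)) (by
      rw [Algebra.algebraMap_eq_smul_one] at hrel
      linear_combination (norm := module) hrel)
  have hfu : f (u k μ c) ≠ 0 := (map_ne_zero_iff f f.injective).mpr u_ne_zero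
  have hfv : f (v k μ c) ≠ 0 := (map_ne_zero_iff f f.injective).mpr v_ne_zero
  have hα : β = 0 → α ≠ 0 := fun hβ hα => hfu (by rw [← hu, hβ, hα]; simp)
  have hδ : γ = 0 → δ ≠ 0 := fun hγ hδ => hfv (by rw [← hv, hγ, hδ]; simp)
  obtain ⟨rfl, rfl⟩ : β = 0 ∧ γ = 0 := by
    rcases mul_eq_zero.mp ((mul_eq_zero.mp hvu).resolve_right (sub_ne_zero.mpr hμ.symm))
      with hβ | hγ
    · exact ⟨hβ, by simpa [hα hβ, hμ1] using huu⟩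
    · exact ⟨by simpa [hδ hγ, hμ1] using hvv, hγ⟩
  refine ⟨α, δ, hα rfl, hδ rfl, by simp [← hu], by simp [← hv], ?_⟩
  linear_combination h1

section TaftAction

variable {g : QPW k μ c ≃ₐ[k] QPW k μ c} {x : Module.End k (QPW k μ c)} {lam α δ b e : k}

theorem exists_antidiagonal (hgu : g (u k μ c) = α • u k μ c) (hgv : g (v k μ c) = δ • v k μ c)
    (hα : α ≠ 0) (hδ : δ ≠ 0) (hlam : lam ≠ 1)
    (hx : Set.MapsTo x A₁ A₁)
    (hcomm : ∀ a, g (x a) = lam • x (g a)) :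
    ∃ b e : k, x (u k μ c) = b • v k μ c ∧ x (v k μ c) = e • u k μ c ∧
      b * δ = lam * α * b ∧ e * α = lam * δ * e := by
  have hlam' : 1 - lam ≠ 0 := sub_ne_zero.mpr hlam.symm
  obtain ⟨a, b, hxu⟩ := Submodule.mem_span_pair.mp (hx u_mem_span)
  obtain ⟨e, d, hxv⟩ := Submodule.mem_span_pair.mp (hx v_mem_span)
  have hu := hcomm (u k μ c)
  simp only [hgu, map_smul, ← hxu, map_add, hgv, smul_add, smul_smul] at hu
  have hv := hcomm (v k μ c)
  simp only [hgv, map_smul, ← hxv, map_add, hgu, smul_add, smul_smul] at hv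
  obtain ⟨ha, hb⟩ := linearIndependent_u_v.eq_of_pair hu
  obtain ⟨he, hd⟩ := linearIndependent_u_v.eq_of_pair hv
  have ha0 : a = 0 := by
    simpa [hα, hlam'] using (show a * α * (1 - lam) = 0 by linear_combination ha)
  have hd0 : d = 0 := by
    simpa [hδ, hlam'] using (show d * δ * (1 - lam) = 0 by linear_combination hd)
  refine ⟨b, e, by simp [← hxu, ha0], by simp [← hxv, hd0], by linear_combination hb,
    by linear_combination he⟩

theorem coeff_relations_of_leibniz (hμ : μ ^ 2 ≠ 1) (hgu : g (u k μ c) = α • u k μ c)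
    (hgv : g (v k μ c) = δ • v k μ c) (hskew : ∀ a a', x (a * a') = g a * x a' + x a * a')
    (hxu : x (u k μ c) = b • v k μ c) (hxv : x (v k μ c) = e • u k μ c) :
    e * (α - μ) = 0 ∧ b * (1 - μ * δ) = 0 := by
  have hx1 : x 1 = 0 := by simpa using hskew 1 1
  have hrel := congrArg x (u_mul_v (k := k) (μ := μ) (c := c))
  simp only [map_add, map_smul, hskew, hgu, hgv, hxu, hxv, Algebra.algebraMap_eq_smul_one, hx1,
    smul_zero, add_zero, smul_mul_assoc, mul_smul_comm, smul_smul, smul_add] at hrel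
  obtain ⟨-, huu, -, hvv⟩ := coeffs_eq_zero_of_quadratic_eq_zero (c := c) hμ
    (a := 0) (b := e * (α - μ)) (d := 0) (e := b * (1 - μ * δ)) (by
      linear_combination (norm := module) hrel)
  exact ⟨huu, hvv⟩

theorem formA_of_apply (hgu : g (u k μ c) = α • u k μ c) (hgv : g (v k μ c) = δ • v k μ c)
    (hα : α ≠ 0) (hc : α * δ * c = c) (hxu : x (u k μ c) = 0) (hxv : x (v k μ c) = e • u k μ c)
    (he0 : e ≠ 0) (he : e * α = lam * δ * e) (he' : e * (α - μ) = 0) : FormA lam g x := by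
  have hαμ : α = μ := sub_eq_zero.mp ((mul_eq_zero.mp he').resolve_left he0)
  have hαδ : α = lam * δ := mul_left_cancel₀ he0 (by linear_combination he)
  have hlam : lam ≠ 0 := left_ne_zero_of_mul (hαδ ▸ hα)
  have hδ : δ = lam⁻¹ * μ := by rw [← hαμ, hαδ, inv_mul_cancel_left₀ hlam]
  refine ⟨hαμ ▸ hgu, hδ ▸ hgv, hxu, ⟨e, he0, hxv⟩, fun hc0 => ?_⟩
  have hαδ1 : α * δ = 1 := by simpa [hc0] using hc
  linear_combination (-lam) * hαδ1 - α * hαδ + (α + μ) * hαμ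

theorem formB_of_apply (hgu : g (u k μ c) = α • u k μ c) (hgv : g (v k μ c) = δ • v k μ c)
    (hδ : δ ≠ 0) (hc : α * δ * c = c) (hxu : x (u k μ c) = b • v k μ c) (hxv : x (v k μ c) = 0)
    (hb0 : b ≠ 0) (hb : b * δ = lam * α * b) (hb' : b * (1 - μ * δ) = 0) : FormB lam g x := by
  have hμδ : μ * δ = 1 := (sub_eq_zero.mp ((mul_eq_zero.mp hb').resolve_left hb0)).symm
  have hδα : δ = lam * α := mul_left_cancel₀ hb0 (by linear_combination hb)
  have hlam : lam ≠ 0 := left_ne_zero_of_mul (hδα ▸ hδ)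
  have hδμ : δ = μ⁻¹ := eq_inv_of_mul_eq_one_right hμδ
  have hα : α = lam⁻¹ * μ⁻¹ := by rw [← hδμ, hδα, inv_mul_cancel_left₀ hlam]
  refine ⟨hα ▸ hgu, hδμ ▸ hgv, ⟨b, hb0, hxu⟩, hxv, fun hc0 => ?_⟩
  have hαδ1 : α * δ = 1 := by simpa [hc0] using hc
  refine eq_inv_of_mul_eq_one_left ?_
  linear_combination (-lam * μ ^ 2) * hαδ1 - μ ^ 2 * δ * hδα + (μ * δ + 1) * hμδ

theorem formA_or_formB (hμ : μ ^ 2 ≠ 1) (hlam : lam ≠ 1)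
    (hg : Set.MapsTo g A₁ A₁)
    (hx : Set.MapsTo x A₁ A₁)
    (hcomm : ∀ a, g (x a) = lam • x (g a)) (hskew : ∀ a a', x (a * a') = g a * x a' + x a * a')
    (hnil : IsNilpotent x) (hx0 : x ≠ 0) : FormA lam g x ∨ FormB lam g x := by
  obtain ⟨α, δ, hα, hδ, hgu, hgv, hc⟩ := exists_eq_smul_of_mapsTo_span hμ g hg
  obtain ⟨b, e, hxu, hxv, hb, he⟩ := exists_antidiagonal hgu hgv hα hδ hlam hx hcomm
  obtain ⟨he', hb'⟩ := coeff_relations_of_leibniz hμ hgu hgv hskew hxu hxv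
  have hne : ¬(b = 0 ∧ e = 0) := by
    rintro ⟨rfl, rfl⟩
    exact hx0 (LinearMap.eq_zero_of_twisted_leibniz adjoin_u_v g hskew (by simp [hxu, hxv]))
  rcases mul_eq_zero.mp (Module.End.mul_eq_zero_of_isNilpotent hnil u_ne_zero hxu hxv)
    with rfl | rfl
  · exact .inl <| formA_of_apply hgu hgv hα hc (by simp [hxu]) hxv (by tauto) he he'
  · exact .inr <| formB_of_apply hgu hgv hδ hc hxu (by simp [hxv]) (by tauto) hb hb'

end TaftAction

end QPW

theorem IsPrimitiveRoot.dvd_of_apply_eq_smul {K A : Type*} [Field K] [Ring A] [Algebra K A]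
    {ζ : K} {κ n : ℕ} (hζ : IsPrimitiveRoot ζ κ) {g : A ≃ₐ[K] A} {a : A}
    (ha : a ≠ 0) (hga : g a = ζ • a) (hg : g ^ n = 1) : κ ∣ n := by
  have hpow : ∀ m : ℕ, (g ^ m) a = ζ ^ m • a := by
    intro m
    induction m with
    | zero => simp
    | succ m ih => rw [pow_succ, AlgEquiv.mul_apply, hga, map_smul, ih, smul_smul, pow_succ']
  refine hζ.dvd_of_pow_eq_one n (smul_left_injective K ha ?_)
  simpa [hg] using (hpow n).symm

section

variable {k : Type} [Field k] {μ c lam lam' q : k} {g g' : QPW k μ c ≃ₐ[k] QPW k μ c}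
  {x x' : Module.End k (QPW k μ c)}

theorem FormA.not_formB (hA : FormA lam g x) : ¬FormB lam' g' x := by
  rintro ⟨-, -, ⟨η, hη, hxu⟩, -⟩
  exact smul_ne_zero hη QPW.v_ne_zero (hxu.symm.trans hA.2.2.1)

theorem FormA.not_formB_of_comm (hA : FormA lam g x) (hB : FormB lam' g' x')
    (h : ∀ a, x (x' a) = q • x' (x a)) : False := by
  obtain ⟨-, -, hxu, ⟨η, hη, hxv⟩, -⟩ := hA
  obtain ⟨-, -, ⟨τ, hτ, hxu'⟩, -⟩ := hB
  have hu := h (QPW.u k μ c)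
  rw [hxu', map_smul, hxv, hxu, map_zero, smul_zero, smul_smul] at hu
  exact smul_ne_zero (mul_ne_zero hτ hη) QPW.u_ne_zero hu

theorem FormA.eq_of_comm (hμ : μ ≠ 0) (hA : FormA lam g x) (hA' : FormA lam' g' x')
    (h : ∀ a, g (x' a) = q • x' (g a)) : lam = q := by
  obtain ⟨hgu, hgv, -⟩ := hA
  obtain ⟨-, -, -, ⟨η, hη, hxv⟩, -⟩ := hA'
  have hv := h (QPW.v k μ c)
  rw [hxv, map_smul, hgu, hgv, map_smul, hxv, smul_smul, smul_smul, smul_smul] at hv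
  have hq : q * lam⁻¹ = 1 := mul_right_cancel₀ (mul_ne_zero hη hμ)
    (by linear_combination -(smul_left_injective k QPW.u_ne_zero hv))
  exact inv_inj.mp (eq_inv_of_mul_eq_one_right hq)

theorem FormB.eq_of_comm (hμ : μ ≠ 0) (hB : FormB lam g x) (hB' : FormB lam' g' x')
    (h : ∀ a, g (x' a) = q • x' (g a)) : lam = q := by
  obtain ⟨hgu, hgv, -⟩ := hB
  obtain ⟨-, -, ⟨η, hη, hxu⟩, -⟩ := hB'
  have hu := h (QPW.u k μ c)
  rw [hxu, map_smul, hgv, hgu, map_smul, hxu, smul_smul, smul_smul, smul_smul] at hu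
  have hq : q * lam⁻¹ = 1 := mul_right_cancel₀ (mul_ne_zero hη (inv_ne_zero hμ))
    (by linear_combination -(smul_left_injective k QPW.v_ne_zero hu))
  exact inv_inj.mp (eq_inv_of_mul_eq_one_right hq)

end

theorem forall_or_forall_of_forall_or {ι : Type*} {P Q : ι → Prop} (h : ∀ i, P i ∨ Q i)
    (hPQ : ∀ i j, P i → Q j → False) : (∀ i, P i) ∨ (∀ i, Q i) := by
  by_cases hP : ∀ i, P i
  · exact .inl hP
  · obtain ⟨j, hj⟩ := not_forall.mp hP
    exact .inr fun i => (h i).resolve_left fun hi => hPQ i j hi ((h j).resolve_left hj)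

theorem stmt_6_general {k : Type} [Field k] {G : Type} [CommGroup G] {θ : ℕ}
    (gs : Fin θ → G) (χs : Fin θ → (G →* k))
    (hm3 : ∀ i, 3 ≤ orderOf (χs i (gs i)))
    {μ c : k} {κ : ℕ} (hμ : IsPrimitiveRoot μ κ) (hκ : 3 ≤ κ)
    (T : BosAction k G gs χs (QPW k μ c))
    (hlinG : ∀ (h : G), ∀ a ∈ Submodule.span k {QPW.u k μ c, QPW.v k μ c},
      T.ρ h a ∈ Submodule.span k {QPW.u k μ c, QPW.v k μ c})
    (hlinx : ∀ (i : Fin θ), ∀ a ∈ Submodule.span k {QPW.u k μ c, QPW.v k μ c},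
      T.x i a ∈ Submodule.span k {QPW.u k μ c, QPW.v k μ c})
    (hif : T.InnerFaithful) :
    (∀ i, κ ∣ orderOf (gs i) ∧
      (FormA (χs i (gs i)) (T.ρ (gs i)) (T.x i) ∨
       FormB (χs i (gs i)) (T.ρ (gs i)) (T.x i))) ∧
    ((∀ i, FormA (χs i (gs i)) (T.ρ (gs i)) (T.x i)) ∨
     (∀ i, FormB (χs i (gs i)) (T.ρ (gs i)) (T.x i))) ∧
    (∀ i j, i ≠ j → χs i (gs i) = χs j (gs i)) := by
  have hμ0 : μ ≠ 0 := hμ.ne_zero (by omega)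
  have hμ2 : μ ^ 2 ≠ 1 := hμ.pow_ne_one_of_pos_of_lt two_ne_zero (by omega)
  have hlam : ∀ i, χs i (gs i) ≠ 1 := fun i h => by simpa [h] using hm3 i
  have hform : ∀ i, FormA (χs i (gs i)) (T.ρ (gs i)) (T.x i) ∨
      FormB (χs i (gs i)) (T.ρ (gs i)) (T.x i) := fun i =>
    QPW.formA_or_formB hμ2 (hlam i) (hlinG _) (hlinx i) (T.comm i _) (T.skew i)
      ⟨_, T.x_pow i⟩ (hif.1 i)
  have hord : ∀ i, T.ρ (gs i) ^ orderOf (gs i) = 1 := fun i => by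
    rw [← map_pow, pow_orderOf_eq_one, map_one]
  have hsame := forall_or_forall_of_forall_or hform fun i j hA hB => by
    rcases eq_or_ne i j with rfl | hij
    · exact hA.not_formB hB
    · exact hA.not_formB_of_comm hB (T.xx i j hij)
  refine ⟨fun i => ⟨?_, hform i⟩, hsame, fun i j hij => ?_⟩
  · rcases hform i with hA | hB
    · exact hμ.dvd_of_apply_eq_smul QPW.u_ne_zero hA.1 (hord i)
    · exact hμ.inv.dvd_of_apply_eq_smul QPW.v_ne_zero hB.2.1 (hord i)
  · rcases hsame with hA | hB
    · exact (hA i).eq_of_comm hμ0 (hA j) (T.comm j (gs i))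
    · exact (hB i).eq_of_comm hμ0 (hB j) (T.comm j (gs i))

/-- Suppose the bosonization `B = B(G, ĝ, χ̂)` of a quantum linear space has
rank `θ` and acts linearly and inner faithfully on `A = k_μ[u,v]` (`c = 0`) or
`A = A_1^μ(k)` (`c = 1`), where `ord(μ) = κ` and all `m_i` are at least `3`.  Then:
(1) `ord(μ)` divides `n_i = ord(g_i)` and each Hopf subalgebra `B_i ≅ T_{n_i}(λ_i,m_i,0)`
acts on `A` by one of the two classified Taft actions (type (a) or type (b));
(2) either all `B_i` act by type (a) or all act by type (b);
(3) for all `i ≠ j`, `λ_i = χ_j(g_i)`. -/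
theorem stmt_6 {k : Type} [Field k] {G : Type} [CommGroup G] [Fintype G] {θ : ℕ}
    (gs : Fin θ → G) (χs : Fin θ → (G →* k))
    (hcomp : ∀ i j, i ≠ j → χs i (gs j) * χs j (gs i) = 1)
    (hm3 : ∀ i, 3 ≤ orderOf (χs i (gs i)))
    {μ c : k} {κ : ℕ} (hμ : IsPrimitiveRoot μ κ) (hκ : 3 ≤ κ) (hc : c = 0 ∨ c = 1)
    (T : BosAction k G gs χs (QPW k μ c))
    (hlinG : ∀ (h : G), ∀ a ∈ Submodule.span k {QPW.u k μ c, QPW.v k μ c},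
      T.ρ h a ∈ Submodule.span k {QPW.u k μ c, QPW.v k μ c})
    (hlinx : ∀ (i : Fin θ), ∀ a ∈ Submodule.span k {QPW.u k μ c, QPW.v k μ c},
      T.x i a ∈ Submodule.span k {QPW.u k μ c, QPW.v k μ c})
    (hif : T.InnerFaithful) :
    (∀ i, κ ∣ orderOf (gs i) ∧
      (FormA (χs i (gs i)) (T.ρ (gs i)) (T.x i) ∨
       FormB (χs i (gs i)) (T.ρ (gs i)) (T.x i))) ∧
    ((∀ i, FormA (χs i (gs i)) (T.ρ (gs i)) (T.x i)) ∨
     (∀ i, FormB (χs i (gs i)) (T.ρ (gs i)) (T.x i))) ∧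
    (∀ i j, i ≠ j → χs i (gs i) = χs j (gs i)) :=
  stmt_6_general gs χs hm3 hμ hκ T hlinG hlinx hif
end
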